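/- arXiv:1302.1729 — 7 statements merged into one kernel-verified Lean document; each statement's English description precedes it below -/
import Mathlib

section
/- Given an adjunction F ⊣ R : 𝒜 → ℬ and a comonad G on 𝒜, the two constructions κ ↦ (Gσ) ∘ (κR) and t ↦ (tF) ∘ (Fη) are mutually inverse bijections between left G-comodule structures on F and comonad morphisms FR ⟶ G. -/
open CategoryTheory

/-!
For an endofunctor `H` of `𝒜`, whiskering with the unit and counit gives mutually inverse maps
`κ ↦ (Hσ) ∘ (κR)` and `τ ↦ (τF) ∘ (Fη)` between natural transformations `F ⟶ HF` and `FR ⟶ H`;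
the triangle identities are exactly the two round trips. For `H = G` it remains to see that the
comodule axioms of `κ` and the comonad-morphism axioms of its transpose imply each other. The
counit axioms correspond through naturality of `ε` and the triangle identity `σF ∘ Fη = 1`. For
coassociativity, naturality of `κ` (resp. `τ`) moves `Fη` past the coaction, and the
comultiplication `FηR` of `FR` is matched with `Gκ` by the triangle identity (resp. by
naturality of `η`).
-/

structure CategoryTheory.Comonad.IsLeftComodule {A B : Type*} [Category A] [Category B]
    {G : Comonad A} {F : B ⥤ A} (κ : F ⟶ F ⋙ (G : A ⥤ A)) : Prop where
  counit : ∀ X, κ.app X ≫ G.ε.app (F.obj X) = 𝟙 (F.obj X)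
  coassoc : ∀ X, κ.app X ≫ G.δ.app (F.obj X) = κ.app X ≫ (G : A ⥤ A).map (κ.app X)

namespace CategoryTheory.Adjunction

variable {A B : Type*} [Category A] [Category B] {F : B ⥤ A} {R : A ⥤ B} (adj : F ⊣ R)

def whiskerCounit {H : A ⥤ A} (κ : F ⟶ F ⋙ H) : R ⋙ F ⟶ H where
  app X := κ.app (R.obj X) ≫ H.map (adj.counit.app X)
  naturality X Y f := by
    have h := κ.naturality (R.map f)
    dsimp at h ⊢
    rw [reassoc_of% h, Category.assoc, ← H.map_comp, ← H.map_comp, counit_naturality]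

@[simps]
def whiskerUnit {H : A ⥤ A} (τ : R ⋙ F ⟶ H) : F ⟶ F ⋙ H where
  app X := F.map (adj.unit.app X) ≫ τ.app (F.obj X)
  naturality X Y f := by
    have h := τ.naturality (F.map f)
    dsimp at h ⊢
    rw [Category.assoc, ← h, ← F.map_comp_assoc, ← F.map_comp_assoc, unit_naturality]

lemma map_unit_comp_app_comp_map_counit {H : A ⥤ A} (κ : F ⟶ F ⋙ H) (X : B) :
    F.map (adj.unit.app X) ≫ κ.app (R.obj (F.obj X)) ≫ H.map (adj.counit.app (F.obj X)) =
      κ.app X := by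
  simp [reassoc_of% κ.naturality (adj.unit.app X), ← H.map_comp]

lemma map_unit_obj_comp_app_comp_map_counit {H : A ⥤ A} (τ : R ⋙ F ⟶ H) (X : A) :
    F.map (adj.unit.app (R.obj X)) ≫ τ.app (F.obj (R.obj X)) ≫ H.map (adj.counit.app X) =
      τ.app X := by
  simp [← τ.naturality, ← F.map_comp_assoc]

variable {G : Comonad A}

def comonadHomOfIsLeftComodule (κ : F ⟶ F ⋙ (G : A ⥤ A)) (hκ : Comonad.IsLeftComodule κ) :
    adj.toComonad ⟶ G where
  toNatTrans := adj.whiskerCounit κ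
  -- the `show`s unfold the comonad `FR`: counit `σ`, comultiplication `FηR`
  app_ε X := show (κ.app (R.obj X) ≫ G.map (adj.counit.app X)) ≫ G.ε.app X =
      adj.counit.app X by
    dsimp only [Functor.id_obj]
    rw [Category.assoc, G.counit_naturality, reassoc_of% hκ.counit]
  app_δ X := show (κ.app (R.obj X) ≫ G.map (adj.counit.app X)) ≫ G.δ.app X =
      F.map (adj.unit.app (R.obj X)) ≫
        (κ.app (R.obj (F.obj (R.obj X))) ≫ G.map (adj.counit.app (F.obj (R.obj X)))) ≫
          G.map (κ.app (R.obj X) ≫ G.map (adj.counit.app X)) by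
    dsimp only [Functor.id_obj]
    have h := κ.naturality (adj.unit.app (R.obj X))
    dsimp at h
    simp only [Category.assoc]
    rw [G.delta_naturality, reassoc_of% hκ.coassoc, reassoc_of% h, ← G.map_comp_assoc,
      left_triangle_components, G.map_id, Category.id_comp, G.map_comp]

lemma isLeftComodule_whiskerUnit (τ : R ⋙ F ⟶ G)
    (hε : ∀ X, τ.app X ≫ G.ε.app X = adj.counit.app X)
    (hδ : ∀ X, τ.app X ≫ G.δ.app X =
      F.map (adj.unit.app (R.obj X)) ≫ τ.app (F.obj (R.obj X)) ≫ G.map (τ.app X)) :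
    Comonad.IsLeftComodule (adj.whiskerUnit τ) where
  counit X := by
    rw [whiskerUnit_app, Category.assoc, hε, left_triangle_components]
  coassoc X := by
    have h := τ.naturality (F.map (adj.unit.app X))
    dsimp at h
    simp only [whiskerUnit_app, Category.assoc]
    rw [hδ, G.map_comp, ← reassoc_of% h, ← F.map_comp_assoc, ← F.map_comp_assoc,
      unit_naturality]

end CategoryTheory.Adjunction

/-- For an adjunction `F ⊣ R : 𝒜 → ℬ` (with `F : ℬ ⥤ 𝒜` the left adjoint,
unit `η` and counit `σ`) and a comonad `G` on `𝒜`, the two constructions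
`κ ↦ (Gσ) ∘ (κR)` and `t ↦ (tF) ∘ (Fη)` are mutually inverse bijections between left
`G`-comodule structures on `F` and comonad morphisms `FR ⟶ G`. -/
theorem statement2 {A : Type*} {B : Type*} [Category A] [Category B]
    (F : B ⥤ A) (R : A ⥤ B) (adj : F ⊣ R) (G : Comonad A) :
    -- (a) `κ ↦ (Gσ) ∘ (κR)` sends comodule structures to comonad morphisms:
    (∀ κ : F ⟶ F ⋙ (G : A ⥤ A),
      (∀ X : B, κ.app X ≫ G.ε.app (F.obj X) = 𝟙 (F.obj X)) →
      (∀ X : B, κ.app X ≫ G.δ.app (F.obj X) = κ.app X ≫ (G : A ⥤ A).map (κ.app X)) →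
      ∃ t : adj.toComonad ⟶ G,
        ∀ X : A, t.app X = κ.app (R.obj X) ≫ (G : A ⥤ A).map (adj.counit.app X)) ∧
    -- (b) `t ↦ (tF) ∘ (Fη)` sends comonad morphisms to comodule structures:
    (∀ t : adj.toComonad ⟶ G,
      (∀ X : B,
        (F.map (adj.unit.app X) ≫ t.app (F.obj X)) ≫ G.ε.app (F.obj X) = 𝟙 (F.obj X)) ∧
      (∀ X : B,
        (F.map (adj.unit.app X) ≫ t.app (F.obj X)) ≫ G.δ.app (F.obj X) =
          (F.map (adj.unit.app X) ≫ t.app (F.obj X)) ≫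
            (G : A ⥤ A).map (F.map (adj.unit.app X) ≫ t.app (F.obj X)))) ∧
    -- (c) starting from a comodule structure `κ`, the round trip returns `κ`:
    (∀ κ : F ⟶ F ⋙ (G : A ⥤ A),
      (∀ X : B, κ.app X ≫ G.ε.app (F.obj X) = 𝟙 (F.obj X)) →
      (∀ X : B, κ.app X ≫ G.δ.app (F.obj X) = κ.app X ≫ (G : A ⥤ A).map (κ.app X)) →
      ∀ X : B,
        F.map (adj.unit.app X) ≫
          (κ.app (R.obj (F.obj X)) ≫ (G : A ⥤ A).map (adj.counit.app (F.obj X))) =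
        κ.app X) ∧
    -- (d) starting from a comonad morphism `t`, the round trip returns `t`:
    (∀ t : adj.toComonad ⟶ G, ∀ X : A,
      F.map (adj.unit.app (R.obj X)) ≫ t.app (F.obj (R.obj X)) ≫
        (G : A ⥤ A).map (adj.counit.app X) = t.app X) := by
  refine ⟨fun κ hε hδ => ⟨adj.comonadHomOfIsLeftComodule κ ⟨hε, hδ⟩, fun _ => rfl⟩,
    fun t => ?_,
    fun κ _ _ => adj.map_unit_comp_app_comp_map_counit κ,
    fun t => adj.map_unit_obj_comp_app_comp_map_counit t.toNatTrans⟩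
  have h := adj.isLeftComodule_whiskerUnit t.toNatTrans t.app_ε t.app_δ
  exact ⟨h.counit, h.coassoc⟩
end

section
/- Let T be a monad on a category 𝒜 whose unit e : 1 ⟶ T is a split monomorphism of functors (i.e. there is e' : T ⟶ 1 with e' ∘ e = 1). If 𝒜 is Cauchy complete (idempotents split), then every pair of parallel morphisms in 𝒜 whose image under the free functor φ_T : 𝒜 → 𝒜_T admits a split equalizer, itself admits a split equalizer in 𝒜, and this equalizer is preserved by φ_T. -/
open CategoryTheory

/-!
If `ι'` is a split equalizer of `(f', g')`, then `q = leftRetraction ≫ ι'` is an idempotent on `X'`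
fixing every map that equalizes `f'` and `g'`. When `(f, g)` is a retract of `(f', g')` as a diagram
on `WalkingParallelPair`, conjugating `q` by the retraction gives an idempotent on `X`, and a
splitting of it is a split equalizer of `(f, g)`; the right retraction is transported from
`(f', g')` in the same way. A retraction `e'` of the unit exhibits `(f, g)` as such a retract of
`(T f, T g)`, and forgetting the algebra structure turns the given split equalizer of
`(φ_T f, φ_T g)` into one of `(T f, T g)`. Split equalizers are absolute, so the one obtained is
preserved by `φ_T`.
-/

namespace CategoryTheory

open Limits WalkingParallelPair

universe v u

variable {C : Type u} [Category.{v} C]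

theorem IsSplitEqualizer.comp_leftRetraction_ι {X Y W Z : C} {f g : X ⟶ Y} {ι : W ⟶ X}
    (se : IsSplitEqualizer f g ι) (k : Z ⟶ X) (hk : k ≫ f = k ≫ g) :
    k ≫ se.leftRetraction ≫ ι = k := by
  rw [← se.top_rightRetraction, reassoc_of% hk, se.bottom_rightRetraction, Category.comp_id]

namespace Retract

variable {X Y X' Y' : C} {f g : X ⟶ Y} {f' g' : X' ⟶ Y'}
  (h : Retract (parallelPair f g) (parallelPair f' g'))

theorem parallelPair_i_left : f ≫ h.i.app one = h.i.app zero ≫ f' :=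
  h.i.naturality WalkingParallelPairHom.left

theorem parallelPair_i_right : g ≫ h.i.app one = h.i.app zero ≫ g' :=
  h.i.naturality WalkingParallelPairHom.right

theorem parallelPair_r_left : f' ≫ h.r.app one = h.r.app zero ≫ f :=
  h.r.naturality WalkingParallelPairHom.left

theorem parallelPair_r_right : g' ≫ h.r.app one = h.r.app zero ≫ g :=
  h.r.naturality WalkingParallelPairHom.right

@[simp]
theorem parallelPair_retract_zero : h.i.app zero ≫ h.r.app zero = 𝟙 X :=
  NatTrans.congr_app h.retract zero

end Retract

namespace IsSplitEqualizer

variable {X Y X' Y' W' : C} {f g : X ⟶ Y} {f' g' : X' ⟶ Y'} {ι' : W' ⟶ X'}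
  (se : IsSplitEqualizer f' g' ι') (h : Retract (parallelPair f g) (parallelPair f' g'))

def idempotentOfRetract : X ⟶ X :=
  h.i.app zero ≫ se.leftRetraction ≫ ι' ≫ h.r.app zero

theorem idempotentOfRetract_comp_eq :
    se.idempotentOfRetract h ≫ f = se.idempotentOfRetract h ≫ g := by
  simp only [idempotentOfRetract, Category.assoc, ← h.parallelPair_r_left,
    ← h.parallelPair_r_right, se.condition_assoc]

theorem idempotentOfRetract_idem :
    se.idempotentOfRetract h ≫ se.idempotentOfRetract h = se.idempotentOfRetract h := by
  -- `q ≫ h.r ≫ h.i` equalizes `f'` and `g'`, so it is fixed by `q`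
  have hfix : (se.leftRetraction ≫ ι' ≫ h.r.app zero ≫ h.i.app zero) ≫ se.leftRetraction ≫ ι' =
      se.leftRetraction ≫ ι' ≫ h.r.app zero ≫ h.i.app zero := by
    refine se.comp_leftRetraction_ι _ ?_
    simp only [Category.assoc, ← h.parallelPair_i_left, ← h.parallelPair_i_right,
      ← (reassoc_of% h.parallelPair_r_left), ← (reassoc_of% h.parallelPair_r_right),
      se.condition_assoc]
  simp only [idempotentOfRetract, Category.assoc] at hfix ⊢
  rw [reassoc_of% hfix]
  simp

def ofRetract {W : C} (ι : W ⟶ X) (ρ : X ⟶ W) (hιρ : ι ≫ ρ = 𝟙 W)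
    (hρι : ρ ≫ ι = se.idempotentOfRetract h) : IsSplitEqualizer f g ι where
  leftRetraction := ρ
  rightRetraction := h.i.app one ≫ se.rightRetraction ≫ h.r.app zero
  condition := by
    have hι : ι = ι ≫ se.idempotentOfRetract h := by rw [← hρι, reassoc_of% hιρ]
    rw [hι, Category.assoc, Category.assoc, se.idempotentOfRetract_comp_eq]
  ι_leftRetraction := hιρ
  bottom_rightRetraction := by simp [(reassoc_of% h.parallelPair_i_right)]
  top_rightRetraction := by
    simp [(reassoc_of% h.parallelPair_i_left), hρι, idempotentOfRetract]

end IsSplitEqualizer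

theorem IsSplitEqualizer.hasSplitEqualizer_of_retract [IsIdempotentComplete C]
    {X Y X' Y' W' : C} {f g : X ⟶ Y} {f' g' : X' ⟶ Y'} {ι' : W' ⟶ X'}
    (se : IsSplitEqualizer f' g' ι') (h : Retract (parallelPair f g) (parallelPair f' g')) :
    HasSplitEqualizer f g := by
  obtain ⟨W, ι, ρ, hιρ, hρι⟩ := IsIdempotentComplete.idempotents_split X _
    (se.idempotentOfRetract_idem h)
  exact ⟨W, ι, ⟨se.ofRetract h ι ρ hιρ hρι⟩⟩

def Retract.parallelPairMap {F : C ⥤ C} (h : Retract (𝟭 C) F) {X Y : C} (f g : X ⟶ Y) :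
    Retract (parallelPair f g) (parallelPair (F.map f) (F.map g)) where
  i := parallelPairHom _ _ _ _ (h.i.app X) (h.i.app Y) (h.i.naturality f) (h.i.naturality g)
  r := parallelPairHom _ _ _ _ (h.r.app X) (h.r.app Y) (h.r.naturality f) (h.r.naturality g)
  retract := by
    ext j
    cases j <;> exact NatTrans.congr_app h.retract _

end CategoryTheory

/-- Let `T` be a monad on a category `𝒜` whose unit `e : 1 ⟶ T` is a split
monomorphism of functors (there is `e' : T ⟶ 1` with `e' ∘ e = 1`). If `𝒜` is Cauchy
complete, then every parallel pair in `𝒜` whose image under the free functor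
`φ_T : 𝒜 → 𝒜_T` admits a split equalizer itself admits a split equalizer in `𝒜`, and
this equalizer is preserved by `φ_T` (its image is again a split equalizer). -/
theorem statement4 {A : Type*} [Category A] (T : Monad A)
    (e' : (T : A ⥤ A) ⟶ 𝟭 A) (he : T.η ≫ e' = 𝟙 (𝟭 A))
    [IsIdempotentComplete A]
    {X Y : A} (f g : X ⟶ Y)
    (hsplit : ∃ (E' : T.Algebra) (ι' : E' ⟶ T.free.obj X),
      Nonempty (CategoryTheory.IsSplitEqualizer (T.free.map f) (T.free.map g) ι')) :
    ∃ (E : A) (ι : E ⟶ X),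
      Nonempty (CategoryTheory.IsSplitEqualizer f g ι) ∧
      Nonempty (CategoryTheory.IsSplitEqualizer (T.free.map f) (T.free.map g) (T.free.map ι)) := by
  obtain ⟨E', ι', ⟨se⟩⟩ := hsplit
  have seT : IsSplitEqualizer (T.map f) (T.map g) ι'.f := se.map T.forget
  have hT : Retract (𝟭 A) (T : A ⥤ A) := ⟨T.η, e', he⟩
  obtain ⟨E, ι, ⟨se₀⟩⟩ := (seT.hasSplitEqualizer_of_retract (hT.parallelPairMap f g)).splittable
  exact ⟨E, ι, ⟨se₀⟩, ⟨se₀.map T.free⟩⟩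
end

section
/- Let 𝒜 be a Cauchy complete category and L ⊣ R : 𝒜 → ℬ an adjunction whose unit ν : 1 ⟶ RL is a split monomorphism. Then for any functor F : 𝒜 → 𝔼 and K : 𝔼 → ℬ with KF naturally isomorphic to R, the functor F is conservative. -/
open CategoryTheory

/-!
The split unit exhibits `𝟭 A` as a retract of `R ⋙ L`, so every morphism `f` is a retract of
`(R ⋙ L).map f`. A retract of an isomorphism is an isomorphism, so `R ⋙ L` reflects isomorphisms;
hence so do its first factor `R ≅ F ⋙ K` and, in turn, the first factor `F`.
-/

namespace CategoryTheory

variable {C D : Type*} [Category C] [Category D]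

def Retract.retractArrowMap {F G : C ⥤ D} (h : Retract F G) {X Y : C} (f : X ⟶ Y) :
    RetractArrow (F.map f) (G.map f) :=
  h.map (Functor.mapArrowFunctor C D ⋙ (evaluation _ _).obj (Arrow.mk f))

lemma Functor.reflectsIsomorphisms_of_retract {F G : C ⥤ D} (h : Retract F G)
    [F.ReflectsIsomorphisms] : G.ReflectsIsomorphisms where
  reflects f hf :=
    have : IsIso (F.map f) := (MorphismProperty.isomorphisms D).of_retract (h.retractArrowMap f) hf
    isIso_of_reflects_iso f F

end CategoryTheory

theorem statement5_general {A : Type*} {B : Type*} {E : Type*}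
    [Category A] [Category B] [Category E]
    (R : A ⥤ B) (L : B ⥤ A) (adj : R ⊣ L)
    (ν' : R ⋙ L ⟶ 𝟭 A) (hν : adj.unit ≫ ν' = 𝟙 (𝟭 A))
    (F : A ⥤ E) (K : E ⥤ B) (iso : F ⋙ K ≅ R) :
    F.ReflectsIsomorphisms := by
  have : (R ⋙ L).ReflectsIsomorphisms :=
    Functor.reflectsIsomorphisms_of_retract (F := 𝟭 A) ⟨adj.unit, ν', hν⟩
  have : R.ReflectsIsomorphisms := reflectsIsomorphisms_of_comp R L
  have : (F ⋙ K).ReflectsIsomorphisms := reflectsIsomorphisms_of_iso iso.symm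
  exact reflectsIsomorphisms_of_comp F K

/-- Let `𝒜` be a Cauchy complete category and `L ⊣ R : 𝒜 → ℬ` an adjunction
whose unit `ν : 1 ⟶ RL` is a split monomorphism.  Then for any functor `F : 𝒜 → 𝔼` and
`K : 𝔼 → ℬ` with `KF` naturally isomorphic to `R`, the functor `F` is conservative.

Here `R : 𝒜 ⥤ ℬ` and `L : ℬ ⥤ 𝒜`, and the adjunction relating them has unit
`ν : 𝟭 𝒜 ⟶ R ⋙ L` living on `𝒜` (as in the source, where `RL` denotes the composite
"first `R`, then `L`" and the Cauchy completeness of `𝒜` is what is used); split means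
there is `ν' : R ⋙ L ⟶ 𝟭 𝒜` with `ν' ∘ ν = 1`. -/
theorem statement5 {A : Type*} {B : Type*} {E : Type*}
    [Category A] [Category B] [Category E]
    [IsIdempotentComplete A]
    (R : A ⥤ B) (L : B ⥤ A) (adj : R ⊣ L)
    (ν' : R ⋙ L ⟶ 𝟭 A) (hν : adj.unit ≫ ν' = 𝟙 (𝟭 A))
    (F : A ⥤ E) (K : E ⥤ B) (iso : F ⋙ K ≅ R) :
    F.ReflectsIsomorphisms :=
  statement5_general R L adj ν' hν F K iso
end

section
/- Let 𝒜 be a Cauchy complete category and L ⊣ R : 𝒜 → ℬ an adjunction whose unit is a split monomorphism. Then R is a comonadic functor. -/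
/-!
A retraction `r` of the unit `η` makes `F` faithful, and every coalgebra morphism
`f : F X ⟶ F Y` between cofree coalgebras is `F (η_X ≫ G f ≫ r_Y)`, so the comparison functor is
fully faithful. For a coalgebra `a : Y ⟶ F (G Y)` the
endomorphism `G a ≫ r` of `G Y` is idempotent; splitting it as `e ≫ i` with `i ≫ e = 𝟙 X`, the
maps `a ≫ F e` and `F i ≫ ε_Y` are inverse coalgebra isomorphisms between `Y` and the coalgebra
`F X`, which gives essential surjectivity.
-/

open CategoryTheory Category

namespace CategoryTheory.Adjunction

variable {C D : Type*} [Category C] [Category D] {F : C ⥤ D} {G : D ⥤ C} (adj : F ⊣ G)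
  {r : F ⋙ G ⟶ 𝟭 C}

lemma unit_app_comp_app_of_unit_comp_eq_id (hr : adj.unit ≫ r = 𝟙 (𝟭 C)) (X : C) :
    adj.unit.app X ≫ r.app X = 𝟙 X :=
  NatTrans.congr_app hr X

lemma faithful_of_unit_comp_eq_id (hr : adj.unit ≫ r = 𝟙 (𝟭 C)) : F.Faithful :=
  have (X : C) : Mono (adj.unit.app X) :=
    SplitMono.mono ⟨r.app X, adj.unit_app_comp_app_of_unit_comp_eq_id hr X⟩
  adj.faithful_L_of_mono_unit_app

lemma map_unit_app_comp_map_comp_app (hr : adj.unit ≫ r = 𝟙 (𝟭 C)) {X Y : C}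
    {f : F.obj X ⟶ F.obj Y}
    (hf : F.map (adj.unit.app X) ≫ F.map (G.map f) = f ≫ F.map (adj.unit.app Y)) :
    F.map (adj.unit.app X ≫ G.map f ≫ r.app Y) = f := by
  rw [F.map_comp, F.map_comp, reassoc_of% hf, ← F.map_comp,
    adj.unit_app_comp_app_of_unit_comp_eq_id hr, F.map_id, comp_id]

lemma full_comparison_of_unit_comp_eq_id (hr : adj.unit ≫ r = 𝟙 (𝟭 C)) :
    (Comonad.comparison adj).Full where
  map_surjective g := ⟨_, Comonad.Coalgebra.Hom.ext (adj.map_unit_app_comp_map_comp_app hr g.h)⟩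

section Splitting

variable {Y : D} {a : Y ⟶ F.obj (G.obj Y)}

variable (r a) in
def coalgebraIdempotent : G.obj Y ⟶ G.obj Y :=
  G.map a ≫ r.app (G.obj Y)

lemma coalgebraIdempotent_comp_map
    (ha : a ≫ F.map (adj.unit.app (G.obj Y)) = a ≫ F.map (G.map a)) :
    coalgebraIdempotent r a ≫ G.map a = coalgebraIdempotent r a ≫ adj.unit.app (G.obj Y) := by
  have h1 := r.naturality (G.map a)
  have h2 := r.naturality (adj.unit.app (G.obj Y))
  dsimp only [coalgebraIdempotent, Functor.comp_obj, Functor.id_obj, Functor.comp_map,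
    Functor.id_map] at *
  rw [assoc, ← h1, ← G.map_comp_assoc, ← ha, G.map_comp_assoc, h2, assoc]

lemma coalgebraIdempotent_idem (hr : adj.unit ≫ r = 𝟙 (𝟭 C))
    (ha : a ≫ F.map (adj.unit.app (G.obj Y)) = a ≫ F.map (G.map a)) :
    coalgebraIdempotent r a ≫ coalgebraIdempotent r a = coalgebraIdempotent r a :=
  calc coalgebraIdempotent r a ≫ coalgebraIdempotent r a
      = (coalgebraIdempotent r a ≫ G.map a) ≫ r.app (G.obj Y) := (assoc _ _ _).symm
    _ = coalgebraIdempotent r a := by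
      rw [adj.coalgebraIdempotent_comp_map ha, assoc, adj.unit_app_comp_app_of_unit_comp_eq_id hr,
        comp_id]

lemma comp_map_coalgebraIdempotent (hr : adj.unit ≫ r = 𝟙 (𝟭 C))
    (ha : a ≫ F.map (adj.unit.app (G.obj Y)) = a ≫ F.map (G.map a)) :
    a ≫ F.map (coalgebraIdempotent r a) = a := by
  dsimp only [coalgebraIdempotent, Functor.comp_obj, Functor.id_obj]
  rw [F.map_comp, ← assoc, ← ha, assoc, ← F.map_comp,
    adj.unit_app_comp_app_of_unit_comp_eq_id hr, F.map_id, comp_id]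

lemma map_coalgebraIdempotent_comp_counit_comp
    (ha : a ≫ F.map (adj.unit.app (G.obj Y)) = a ≫ F.map (G.map a)) :
    F.map (coalgebraIdempotent r a) ≫ adj.counit.app Y ≫ a = F.map (coalgebraIdempotent r a) := by
  dsimp only [Functor.comp_obj, Functor.id_obj]
  rw [← adj.counit_naturality, ← F.map_comp_assoc, adj.coalgebraIdempotent_comp_map ha,
    F.map_comp_assoc, adj.left_triangle_components, comp_id]

lemma comp_map_comp_map_unit_app
    (ha : a ≫ F.map (adj.unit.app (G.obj Y)) = a ≫ F.map (G.map a)) {X : C} (e : G.obj Y ⟶ X) :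
    (a ≫ F.map e) ≫ F.map (adj.unit.app X) = a ≫ F.map (G.map (a ≫ F.map e)) := by
  rw [assoc, ← F.map_comp, ← adj.unit_naturality, F.map_comp, reassoc_of% ha, G.map_comp,
    F.map_comp]

def coalgebraIsoOfSplitting (hr : adj.unit ≫ r = 𝟙 (𝟭 C)) (hε : a ≫ adj.counit.app Y = 𝟙 Y)
    (ha : a ≫ F.map (adj.unit.app (G.obj Y)) = a ≫ F.map (G.map a))
    {X : C} {i : X ⟶ G.obj Y} {e : G.obj Y ⟶ X} (hie : i ≫ e = 𝟙 X)
    (hei : e ≫ i = coalgebraIdempotent r a) : Y ≅ F.obj X where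
  hom := a ≫ F.map e
  inv := F.map i ≫ adj.counit.app Y
  hom_inv_id := by
    rw [assoc, ← F.map_comp_assoc, hei, ← assoc, adj.comp_map_coalgebraIdempotent hr ha, hε]
  inv_hom_id := by
    have hi : F.map i ≫ adj.counit.app Y ≫ a = F.map i := by
      have hip : i ≫ coalgebraIdempotent r a = i := by rw [← hei, ← assoc, hie, id_comp]
      rw [← hip, F.map_comp, assoc, adj.map_coalgebraIdempotent_comp_counit_comp ha]
    rw [assoc, reassoc_of% hi, ← F.map_comp, hie, F.map_id]

end Splitting

lemma essSurj_comparison_of_unit_comp_eq_id [IsIdempotentComplete C]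
    (hr : adj.unit ≫ r = 𝟙 (𝟭 C)) : (Comonad.comparison adj).EssSurj where
  mem_essImage Y := by
    obtain ⟨X, i, e, hie, hei⟩ := IsIdempotentComplete.idempotents_split _ _
      (adj.coalgebraIdempotent_idem (a := Y.a) hr Y.coassoc)
    exact ⟨X, ⟨(Comonad.Coalgebra.isoMk (adj.coalgebraIsoOfSplitting hr Y.counit Y.coassoc hie hei)
      (adj.comp_map_comp_map_unit_app Y.coassoc e).symm).symm⟩⟩

end CategoryTheory.Adjunction

/-- Let `𝒜` be a Cauchy complete category and `L ⊣ R : 𝒜 → ℬ` an adjunction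
whose unit is a split monomorphism.  Then `R` is a comonadic functor: the canonical
comparison functor from `𝒜` to the Eilenberg–Moore category of coalgebras over the
comonad `LR` on `ℬ` generated by the adjunction is an equivalence.

Here `R : 𝒜 ⥤ ℬ`, `L : ℬ ⥤ 𝒜`, the adjunction has unit `ν : 𝟭 𝒜 ⟶ R ⋙ L` (on `𝒜`,
matching the hypothesis that `𝒜` is Cauchy complete), the generated comonad on `ℬ` has
underlying functor `L ⋙ R` (i.e. `LR`), and the comparison functor is
`Comonad.comparison adj : 𝒜 ⥤ adj.toComonad.Coalgebra`. -/
theorem statement6 {A : Type*} {B : Type*} [Category A] [Category B]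
    [IsIdempotentComplete A]
    (R : A ⥤ B) (L : B ⥤ A) (adj : R ⊣ L)
    (ν' : R ⋙ L ⟶ 𝟭 A) (hν : adj.unit ≫ ν' = 𝟙 (𝟭 A)) :
    (Comonad.comparison adj).IsEquivalence :=
  have := adj.faithful_of_unit_comp_eq_id hν
  { faithful := Comonad.comparison_faithful_of_faithful adj
    full := adj.full_comparison_of_unit_comp_eq_id hν
    essSurj := adj.essSurj_comparison_of_unit_comp_eq_id hν }
end

section
/- Let (𝒟, ∘, I, ∗, J, ζ) be a duoidal category and (A, m, e, δ, ε) a bimonoid in 𝒟. Then the natural transformation λ_X : (X ∗ A) ∘ A → (X ∘ A) ∗ A given by the composite ((X ∘ A) ∗ m) ∘ ζ_{X,A,A,A} ∘ ((X ∗ A) ∘ δ) is a mixed distributive law from the monad − ∘ A to the comonad − ∗ A on 𝒟. -/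
open CategoryTheory

universe v u

/-- A duoidal category: a category `D` with two monoidal structures `(∘, I)` (`mon₁`)
and `(∗, J)` (`mon₂`), an interchange law
`ζ : (W ∗ X) ∘ (Y ∗ Z) ⟶ (W ∘ Y) ∗ (X ∘ Z)`, and structure morphisms
`Δ : I → I ∗ I`, `μ : J ∘ J → J`, `τ : I → J` satisfying associativity, unitality and
compatibility of the units. -/
structure Duoidal (D : Type u) [Category.{v} D] where
  /-- the first monoidal structure `(∘, I)` -/
  mon₁ : MonoidalCategory D
  /-- the second monoidal structure `(∗, J)` -/
  mon₂ : MonoidalCategory D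
  /-- the interchange law -/
  ζ : ∀ W X Y Z : D,
    mon₁.tensorObj (mon₂.tensorObj W X) (mon₂.tensorObj Y Z) ⟶
      mon₂.tensorObj (mon₁.tensorObj W Y) (mon₁.tensorObj X Z)
  ζ_natural : ∀ {W W' X X' Y Y' Z Z' : D}
    (f₁ : W ⟶ W') (f₂ : X ⟶ X') (f₃ : Y ⟶ Y') (f₄ : Z ⟶ Z'),
    mon₁.tensorHom (mon₂.tensorHom f₁ f₂) (mon₂.tensorHom f₃ f₄) ≫ ζ W' X' Y' Z' =
      ζ W X Y Z ≫ mon₂.tensorHom (mon₁.tensorHom f₁ f₃) (mon₁.tensorHom f₂ f₄)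
  /-- `Δ : I → I ∗ I` -/
  ΔI : mon₁.tensorUnit ⟶ mon₂.tensorObj mon₁.tensorUnit mon₁.tensorUnit
  /-- `μ : J ∘ J → J` -/
  μJ : mon₁.tensorObj mon₂.tensorUnit mon₂.tensorUnit ⟶ mon₂.tensorUnit
  /-- `τ : I → J` -/
  τ : mon₁.tensorUnit ⟶ mon₂.tensorUnit
  -- `(J, μ, τ)` is a monoid in `(D, ∘, I)`
  μJ_assoc : (mon₁.associator mon₂.tensorUnit mon₂.tensorUnit mon₂.tensorUnit).hom ≫
      mon₁.whiskerLeft mon₂.tensorUnit μJ ≫ μJ = mon₁.whiskerRight μJ mon₂.tensorUnit ≫ μJ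
  μJ_unit_left : mon₁.whiskerRight τ mon₂.tensorUnit ≫ μJ =
    (mon₁.leftUnitor mon₂.tensorUnit).hom
  μJ_unit_right : mon₁.whiskerLeft mon₂.tensorUnit τ ≫ μJ =
    (mon₁.rightUnitor mon₂.tensorUnit).hom
  -- `(I, Δ, τ)` is a comonoid in `(D, ∗, J)`
  ΔI_coassoc : ΔI ≫ mon₂.whiskerRight ΔI mon₁.tensorUnit ≫
      (mon₂.associator mon₁.tensorUnit mon₁.tensorUnit mon₁.tensorUnit).hom =
    ΔI ≫ mon₂.whiskerLeft mon₁.tensorUnit ΔI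
  ΔI_counit_left : ΔI ≫ mon₂.whiskerRight τ mon₁.tensorUnit ≫
    (mon₂.leftUnitor mon₁.tensorUnit).hom = 𝟙 mon₁.tensorUnit
  ΔI_counit_right : ΔI ≫ mon₂.whiskerLeft mon₁.tensorUnit τ ≫
    (mon₂.rightUnitor mon₁.tensorUnit).hom = 𝟙 mon₁.tensorUnit
  -- associativity of the interchange law with respect to `∘`
  ζ_assoc₁ : ∀ W X Y Z U V : D,
    mon₁.whiskerRight (ζ W X Y Z) (mon₂.tensorObj U V) ≫
        ζ (mon₁.tensorObj W Y) (mon₁.tensorObj X Z) U V ≫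
        mon₂.tensorHom (mon₁.associator W Y U).hom (mon₁.associator X Z V).hom =
      (mon₁.associator (mon₂.tensorObj W X) (mon₂.tensorObj Y Z) (mon₂.tensorObj U V)).hom ≫
        mon₁.whiskerLeft (mon₂.tensorObj W X) (ζ Y Z U V) ≫
        ζ W X (mon₁.tensorObj Y U) (mon₁.tensorObj Z V)
  -- associativity of the interchange law with respect to `∗`
  ζ_assoc₂ : ∀ W X U Y Z V : D,
    ζ (mon₂.tensorObj W X) U (mon₂.tensorObj Y Z) V ≫
        mon₂.tensorHom (ζ W X Y Z) (𝟙 (mon₁.tensorObj U V)) ≫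
        (mon₂.associator (mon₁.tensorObj W Y) (mon₁.tensorObj X Z) (mon₁.tensorObj U V)).hom =
      mon₁.tensorHom (mon₂.associator W X U).hom (mon₂.associator Y Z V).hom ≫
        ζ W (mon₂.tensorObj X U) Y (mon₂.tensorObj Z V) ≫
        mon₂.whiskerLeft (mon₁.tensorObj W Y) (ζ X U Z V)
  -- unitality of the interchange law
  ζ_unit₁ : ∀ Y Z : D,
    mon₁.whiskerRight ΔI (mon₂.tensorObj Y Z) ≫ ζ mon₁.tensorUnit mon₁.tensorUnit Y Z =
      (mon₁.leftUnitor (mon₂.tensorObj Y Z)).hom ≫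
        mon₂.tensorHom (mon₁.leftUnitor Y).inv (mon₁.leftUnitor Z).inv
  ζ_unit₂ : ∀ Y Z : D,
    mon₁.whiskerLeft (mon₂.tensorObj Y Z) ΔI ≫ ζ Y Z mon₁.tensorUnit mon₁.tensorUnit =
      (mon₁.rightUnitor (mon₂.tensorObj Y Z)).hom ≫
        mon₂.tensorHom (mon₁.rightUnitor Y).inv (mon₁.rightUnitor Z).inv
  ζ_unit₃ : ∀ W Y : D,
    mon₁.tensorHom (mon₂.rightUnitor W).inv (mon₂.rightUnitor Y).inv ≫
        ζ W mon₂.tensorUnit Y mon₂.tensorUnit ≫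
        mon₂.whiskerLeft (mon₁.tensorObj W Y) μJ =
      (mon₂.rightUnitor (mon₁.tensorObj W Y)).inv
  ζ_unit₄ : ∀ W Y : D,
    mon₁.tensorHom (mon₂.leftUnitor W).inv (mon₂.leftUnitor Y).inv ≫
        ζ mon₂.tensorUnit W mon₂.tensorUnit Y ≫
        mon₂.whiskerRight μJ (mon₁.tensorObj W Y) =
      (mon₂.leftUnitor (mon₁.tensorObj W Y)).inv

variable {D : Type u} [Category.{v} D]

/-- A bimonoid in a duoidal category: a monoid `(A, m, e)` in `(D, ∘, I)` and a comonoid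
`(A, δ, ε)` in `(D, ∗, J)`, subject to the four compatibility conditions. -/
structure Bimonoid (Dd : Duoidal D) where
  A : D
  m : Dd.mon₁.tensorObj A A ⟶ A
  e : Dd.mon₁.tensorUnit ⟶ A
  δ : A ⟶ Dd.mon₂.tensorObj A A
  ε : A ⟶ Dd.mon₂.tensorUnit
  m_assoc : (Dd.mon₁.associator A A A).hom ≫ Dd.mon₁.whiskerLeft A m ≫ m =
    Dd.mon₁.whiskerRight m A ≫ m
  m_unit_left : Dd.mon₁.whiskerRight e A ≫ m = (Dd.mon₁.leftUnitor A).hom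
  m_unit_right : Dd.mon₁.whiskerLeft A e ≫ m = (Dd.mon₁.rightUnitor A).hom
  δ_coassoc : δ ≫ Dd.mon₂.whiskerRight δ A ≫ (Dd.mon₂.associator A A A).hom =
    δ ≫ Dd.mon₂.whiskerLeft A δ
  δ_counit_left : δ ≫ Dd.mon₂.whiskerRight ε A ≫ (Dd.mon₂.leftUnitor A).hom = 𝟙 A
  δ_counit_right : δ ≫ Dd.mon₂.whiskerLeft A ε ≫ (Dd.mon₂.rightUnitor A).hom = 𝟙 A
  compat₁ : m ≫ δ = Dd.mon₁.tensorHom δ δ ≫ Dd.ζ A A A A ≫ Dd.mon₂.tensorHom m m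
  compat₂ : m ≫ ε = Dd.mon₁.tensorHom ε ε ≫ Dd.μJ
  compat₃ : e ≫ δ = Dd.ΔI ≫ Dd.mon₂.tensorHom e e
  compat₄ : e ≫ ε = Dd.τ

variable {Dd : Duoidal D} (B : Bimonoid Dd)

/-- `X ∘ A`, the underlying functor (on objects) of the monad `− ∘ A`. -/
def Tob (X : D) : D := Dd.mon₁.tensorObj X B.A

/-- `f ∘ A`, the action of the monad `− ∘ A` on morphisms. -/
def Tmap {X Y : D} (f : X ⟶ Y) : Tob B X ⟶ Tob B Y := Dd.mon₁.whiskerRight f B.A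

/-- the unit `X ≅ X ∘ I → X ∘ A` of the monad `− ∘ A` -/
def ηT (X : D) : X ⟶ Tob B X :=
  (Dd.mon₁.rightUnitor X).inv ≫ Dd.mon₁.whiskerLeft X B.e

/-- the multiplication `(X ∘ A) ∘ A → X ∘ (A ∘ A) → X ∘ A` of the monad `− ∘ A` -/
def μT (X : D) : Tob B (Tob B X) ⟶ Tob B X :=
  (Dd.mon₁.associator X B.A B.A).hom ≫ Dd.mon₁.whiskerLeft X B.m

/-- `X ∗ A`, the underlying functor (on objects) of the comonad `− ∗ A`. -/
def Gob (X : D) : D := Dd.mon₂.tensorObj X B.A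

/-- `f ∗ A`, the action of the comonad `− ∗ A` on morphisms. -/
def Gmap {X Y : D} (f : X ⟶ Y) : Gob B X ⟶ Gob B Y := Dd.mon₂.whiskerRight f B.A

/-- the comultiplication `X ∗ A → X ∗ (A ∗ A) → (X ∗ A) ∗ A` of the comonad `− ∗ A` -/
def δG (X : D) : Gob B X ⟶ Gob B (Gob B X) :=
  Dd.mon₂.whiskerLeft X B.δ ≫ (Dd.mon₂.associator X B.A B.A).inv

/-- the counit `X ∗ A → X ∗ J → X` of the comonad `− ∗ A` -/
def εG (X : D) : Gob B X ⟶ X :=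
  Dd.mon₂.whiskerLeft X B.ε ≫ (Dd.mon₂.rightUnitor X).hom

/-- the entwining `λ_X : (X ∗ A) ∘ A → (X ∗ A) ∘ (A ∗ A) → (X ∘ A) ∗ (A ∘ A) → (X ∘ A) ∗ A` -/
def lam (X : D) : Tob B (Gob B X) ⟶ Gob B (Tob B X) :=
  Dd.mon₁.whiskerLeft (Dd.mon₂.tensorObj X B.A) B.δ ≫ Dd.ζ X B.A B.A B.A ≫
    Dd.mon₂.whiskerLeft (Dd.mon₁.tensorObj X B.A) B.m

/-! Every axiom of the mixed distributive law is the image under `ζ` of a bimonoid axiom.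
Naturality is naturality of `ζ` in its first variable. The unit law follows from `e ≫ δ = Δ ≫ e ∗ e`
and the unitality `ζ_unit₂`, the counit law dually from `m ≫ ε = ε ∘ ε ≫ μ` and `ζ_unit₃`.
For the multiplication law, `m ≫ δ = δ ∘ δ ≫ ζ ≫ m ∗ m` and associativity of `m` bring both sides
to the same composite once `ζ_assoc₁` regroups the two interchanges; the comultiplication law is
the mirror image, using coassociativity of `δ` and `ζ_assoc₂`. -/

open MonoidalCategory

/- `D` carries two monoidal structures and neither is an instance: Mathlib's monoidal lemmas
apply through `simp only`, which finds the structure by unification, but `rw` would try to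
synthesize a `MonoidalCategory D` instance. Hence the explicit structure below. -/
lemma associator_hom_comp_whiskerLeft_tensorHom {C : Type*} [Category C]
    (M : MonoidalCategory C) (X : C) {Y Y' Z Z' : C} (f : Y ⟶ Y') (g : Z ⟶ Z') :
    (M.associator X Y Z).hom ≫ M.whiskerLeft X (M.tensorHom f g) =
      M.tensorHom (M.whiskerLeft X f) g ≫ (M.associator X Y' Z').hom := by
  simpa using (associator_naturality (self := M) (𝟙 X) f g).symm

-- `⊙` is the paper's `∘` and `⊛` its `∗`.
local infixr:70 " ⊙ " => Dd.mon₁.tensorObj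
local infixr:70 " ⊛ " => Dd.mon₂.tensorObj
local infixr:70 " ⊙ₘ " => Dd.mon₁.tensorHom
local infixr:70 " ⊛ₘ " => Dd.mon₂.tensorHom
local infixr:81 " ◁₁ " => Dd.mon₁.whiskerLeft
local infixl:81 " ▷₁ " => Dd.mon₁.whiskerRight
local infixr:81 " ◁₂ " => Dd.mon₂.whiskerLeft
local infixl:81 " ▷₂ " => Dd.mon₂.whiskerRight

namespace Duoidal

lemma ζ_natural₁ {W W' : D} (f : W ⟶ W') (X Y Z : D) :
    (f ▷₂ X) ▷₁ (Y ⊛ Z) ≫ Dd.ζ W' X Y Z = Dd.ζ W X Y Z ≫ (f ▷₁ Y) ▷₂ (X ⊙ Z) := by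
  simpa using Dd.ζ_natural f (𝟙 X) (𝟙 Y) (𝟙 Z)

lemma ζ_natural₂ (W : D) {X X' : D} (g : X ⟶ X') (Y Z : D) :
    (W ◁₂ g) ▷₁ (Y ⊛ Z) ≫ Dd.ζ W X' Y Z = Dd.ζ W X Y Z ≫ (W ⊙ Y) ◁₂ (g ▷₁ Z) := by
  simpa using Dd.ζ_natural (𝟙 W) g (𝟙 Y) (𝟙 Z)

lemma ζ_natural₃ (W X : D) {Y Y' : D} (g : Y ⟶ Y') (Z : D) :
    (W ⊛ X) ◁₁ (g ▷₂ Z) ≫ Dd.ζ W X Y' Z = Dd.ζ W X Y Z ≫ (W ◁₁ g) ▷₂ (X ⊙ Z) := by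
  simpa using Dd.ζ_natural (𝟙 W) (𝟙 X) g (𝟙 Z)

lemma ζ_natural₂₄ (W : D) {X X' : D} (g : X ⟶ X') (Y : D) {Z Z' : D} (h : Z ⟶ Z') :
    ((W ◁₂ g) ⊙ₘ (Y ◁₂ h)) ≫ Dd.ζ W X' Y Z' = Dd.ζ W X Y Z ≫ (W ⊙ Y) ◁₂ (g ⊙ₘ h) := by
  simpa using Dd.ζ_natural (𝟙 W) g (𝟙 Y) h

lemma ζ_natural₃₄ (W X : D) {Y Y' Z Z' : D} (g : Y ⟶ Y') (h : Z ⟶ Z') :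
    (W ⊛ X) ◁₁ (g ⊛ₘ h) ≫ Dd.ζ W X Y' Z' = Dd.ζ W X Y Z ≫ ((W ◁₁ g) ⊛ₘ (X ◁₁ h)) := by
  simpa using Dd.ζ_natural (𝟙 W) (𝟙 X) g h

lemma ζ_comp_whiskerLeft_μJ (W Y : D) :
    Dd.ζ W Dd.mon₂.tensorUnit Y Dd.mon₂.tensorUnit ≫ (W ⊙ Y) ◁₂ Dd.μJ =
      ((Dd.mon₂.rightUnitor W).hom ⊙ₘ (Dd.mon₂.rightUnitor Y).hom) ≫
        (Dd.mon₂.rightUnitor (W ⊙ Y)).inv := by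
  simp [← Dd.ζ_unit₃ W Y]

end Duoidal

open Duoidal

lemma lam_natural {X Y : D} (f : X ⟶ Y) :
    Tmap B (Gmap B f) ≫ lam B Y = lam B X ≫ Gmap B (Tmap B f) := by
  unfold Tmap Gmap lam Tob Gob
  simp only [Category.assoc, ← whisker_exchange_assoc]
  rw [reassoc_of% ζ_natural₁]
  simp only [whisker_exchange]

lemma ηT_comp_lam (X : D) : ηT B (Gob B X) ≫ lam B X = Gmap B (ηT B X) := by
  unfold ηT lam Gmap Tob Gob
  have hζ : (X ⊛ B.A) ◁₁ (B.e ≫ B.δ) ≫ Dd.ζ X B.A B.A B.A =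
      (Dd.mon₁.rightUnitor (X ⊛ B.A)).hom ≫
        (((Dd.mon₁.rightUnitor X).inv ≫ X ◁₁ B.e) ⊛ₘ
          ((Dd.mon₁.rightUnitor B.A).inv ≫ B.A ◁₁ B.e)) := by
    rw [B.compat₃]
    simp only [whiskerLeft_comp, Category.assoc]
    rw [ζ_natural₃₄, reassoc_of% Dd.ζ_unit₂]
    simp only [tensorHom_comp_tensorHom]
  simp only [Category.assoc, ← whiskerLeft_comp_assoc]
  rw [reassoc_of% hζ]
  simp only [Iso.inv_hom_id_assoc, tensorHom_comp_whiskerLeft, Category.assoc, B.m_unit_right,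
    Iso.inv_hom_id, tensorHom_id]

lemma lam_comp_εG (X : D) : lam B X ≫ εG B (Tob B X) = Tmap B (εG B X) := by
  unfold εG lam Tmap Tob Gob
  have hζ : Dd.ζ X B.A B.A B.A ≫ (X ⊙ B.A) ◁₂ (B.m ≫ B.ε) =
      ((X ◁₂ B.ε ≫ (Dd.mon₂.rightUnitor X).hom) ⊙ₘ
          (B.A ◁₂ B.ε ≫ (Dd.mon₂.rightUnitor B.A).hom)) ≫
        (Dd.mon₂.rightUnitor (X ⊙ B.A)).inv := by
    rw [B.compat₂]
    simp only [whiskerLeft_comp]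
    rw [← reassoc_of% ζ_natural₂₄, ζ_comp_whiskerLeft_μJ]
    simp only [tensorHom_comp_tensorHom_assoc]
  simp only [Category.assoc, ← whiskerLeft_comp_assoc]
  rw [reassoc_of% hζ]
  simp only [Iso.inv_hom_id, Category.comp_id, whiskerLeft_comp_tensorHom, B.δ_counit_right,
    tensorHom_id]

lemma μT_comp_lam (X : D) : μT B (Gob B X) ≫ lam B X =
    Tmap B (lam B X) ≫ lam B (Tob B X) ≫ Gmap B (μT B X) := by
  unfold μT lam Tmap Gmap Tob Gob
  calc _ = (((X ⊛ B.A) ◁₁ B.δ) ⊙ₘ B.δ) ≫ (Dd.ζ X B.A B.A B.A) ▷₁ (B.A ⊛ B.A) ≫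
        Dd.ζ (X ⊙ B.A) (B.A ⊙ B.A) B.A B.A ≫
        (((Dd.mon₁.associator X B.A B.A).hom ≫ X ◁₁ B.m) ⊛ₘ (B.m ▷₁ B.A ≫ B.m)) := by
        simp only [Category.assoc, ← whiskerLeft_comp_assoc]
        rw [B.compat₁]
        simp only [whiskerLeft_comp, Category.assoc]
        rw [reassoc_of% ζ_natural₃₄, reassoc_of% associator_hom_comp_whiskerLeft_tensorHom,
          ← reassoc_of% Dd.ζ_assoc₁, ← B.m_assoc]
        simp only [← id_tensorHom, tensorHom_comp_tensorHom, Category.comp_id]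
    _ = _ := by
        simp only [comp_whiskerRight, Category.assoc, ← whisker_exchange_assoc,
          MonoidalCategory.tensorHom_def']
        rw [reassoc_of% ζ_natural₂]
        simp only [← whiskerLeft_comp_assoc]

lemma lam_comp_δG (X : D) : lam B X ≫ δG B (Tob B X) =
    Tmap B (δG B X) ≫ lam B (Gob B X) ≫ Gmap B (lam B X) := by
  unfold δG lam Tmap Gmap Tob Gob
  calc _ = ((X ◁₂ B.δ) ⊙ₘ (B.δ ≫ B.A ◁₂ B.δ)) ≫ Dd.ζ X (B.A ⊛ B.A) B.A (B.A ⊛ B.A) ≫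
        (X ⊙ B.A) ◁₂ Dd.ζ B.A B.A B.A B.A ≫ (X ⊙ B.A) ◁₂ (B.m ⊛ₘ B.m) ≫
        (Dd.mon₂.associator (X ⊙ B.A) B.A B.A).inv := by
        simp only [Category.assoc, ← whiskerLeft_comp_assoc]
        rw [B.compat₁]
        simp only [whiskerLeft_comp, Category.assoc]
        rw [← reassoc_of% ζ_natural₂₄]
        simp only [whiskerLeft_comp_tensorHom_assoc]
    _ = ((X ◁₂ B.δ ≫ (Dd.mon₂.associator X B.A B.A).inv) ⊙ₘ (B.δ ≫ B.δ ▷₂ B.A)) ≫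
        Dd.ζ (X ⊛ B.A) B.A (B.A ⊛ B.A) B.A ≫
        ((Dd.ζ X B.A B.A B.A ≫ (X ⊙ B.A) ◁₂ B.m) ⊛ₘ B.m) := by
        have hcoassoc : (X ◁₂ B.δ) ⊙ₘ (B.δ ≫ B.A ◁₂ B.δ) =
            ((X ◁₂ B.δ ≫ (Dd.mon₂.associator X B.A B.A).inv) ⊙ₘ (B.δ ≫ B.δ ▷₂ B.A)) ≫
              ((Dd.mon₂.associator X B.A B.A).hom ⊙ₘ (Dd.mon₂.associator B.A B.A B.A).hom) := by
          simp [← B.δ_coassoc]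
        rw [hcoassoc, Category.assoc, ← reassoc_of% Dd.ζ_assoc₂,
          reassoc_of% associator_hom_comp_whiskerLeft_tensorHom, Iso.hom_inv_id, Category.comp_id]
        simp only [tensorHom_comp_tensorHom, Category.id_comp]
    _ = _ := by
        simp only [← tensorHom_comp_whiskerLeft_assoc]
        rw [reassoc_of% ζ_natural₃]
        simp only [MonoidalCategory.tensorHom_def, comp_whiskerRight, Category.assoc,
          whisker_exchange, whisker_exchange_assoc]

/-- Let `(𝒟, ∘, I, ∗, J, ζ)` be a duoidal category and `(A, m, e, δ, ε)` a
bimonoid in `𝒟`.  Then the natural transformation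
`λ_X = ((X ∘ A) ∗ m) ∘ ζ_{X,A,A,A} ∘ ((X ∗ A) ∘ δ) : (X ∗ A) ∘ A → (X ∘ A) ∗ A`
is a mixed distributive law from the monad `− ∘ A` to the comonad `− ∗ A` on `𝒟`. -/
theorem statement14 :
    -- naturality of `λ`
    (∀ {X Y : D} (f : X ⟶ Y),
      Tmap B (Gmap B f) ≫ lam B Y = lam B X ≫ Gmap B (Tmap B f)) ∧
    -- λ ∘ eG = Ge
    (∀ X : D, ηT B (Gob B X) ≫ lam B X = Gmap B (ηT B X)) ∧
    -- λ ∘ mG = Gm ∘ λT ∘ Tλ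
    (∀ X : D, μT B (Gob B X) ≫ lam B X =
      Tmap B (lam B X) ≫ lam B (Tob B X) ≫ Gmap B (μT B X)) ∧
    -- εT ∘ λ = Tε
    (∀ X : D, lam B X ≫ εG B (Tob B X) = Tmap B (εG B X)) ∧
    -- δT ∘ λ = Gλ ∘ λG ∘ Tδ
    (∀ X : D, lam B X ≫ δG B (Tob B X) =
      Tmap B (δG B X) ≫ lam B (Gob B X) ≫ Gmap B (lam B X)) :=
  ⟨lam_natural B, ηT_comp_lam B, μT_comp_lam B, lam_comp_εG B, lam_comp_δG B⟩
end

section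
/- Let (𝒟, ∘, I, ∗, J) be a duoidal category and A a bimonoid in 𝒟. The assignment sending a right I-comodule (X, θ) (for the comonoid (I, Δ, τ) in (𝒟, ∗, J)) to the triple (X ∘ A, (X ∘ m) ∘ a, ϑ), where ϑ : X ∘ A → (X ∘ A) ∗ A is ζ ∘ ((X ∗ I) ∘ δ) ∘ (θ ∘ A) followed by the unit isomorphism (I ∘ A) ≅ A, defines a functor K from 𝒟^I to the category 𝒟^A_A of right-right A-Hopf modules making the square U^{Ĝ} ∘ K = φ_A ∘ U^I commute, where φ_A is the free right A-module functor and U^I is the forgetful functor from I-comodules. -/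
open CategoryTheory

universe v u

variable {D : Type u} [Category.{v} D]

variable {Dd : Duoidal D} (B : Bimonoid Dd)

/-- A right comodule over the comonoid `(I, Δ, τ)` in `(𝒟, ∗, J)`. -/
structure IComod (Dd : Duoidal D) where
  X : D
  θ : X ⟶ Dd.mon₂.tensorObj X Dd.mon₁.tensorUnit
  counit : θ ≫ Dd.mon₂.whiskerLeft X Dd.τ ≫ (Dd.mon₂.rightUnitor X).hom = 𝟙 X
  coassoc : θ ≫ Dd.mon₂.whiskerLeft X Dd.ΔI ≫
      (Dd.mon₂.associator X Dd.mon₁.tensorUnit Dd.mon₁.tensorUnit).inv =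
    θ ≫ Dd.mon₂.whiskerRight θ Dd.mon₁.tensorUnit

/-- Morphisms of right `I`-comodules. -/
@[ext]
structure IComodHom {Dd : Duoidal D} (M N : IComod Dd) where
  f : M.X ⟶ N.X
  hcom : M.θ ≫ Dd.mon₂.whiskerRight f Dd.mon₁.tensorUnit = f ≫ N.θ

instance {Dd : Duoidal D} : Category (IComod Dd) where
  Hom M N := IComodHom M N
  id M := ⟨𝟙 M.X, by letI := Dd.mon₂; simp⟩
  comp {M N P} f g := ⟨f.f ≫ g.f, by
    letI := Dd.mon₂
    rw [show Dd.mon₂.whiskerRight (f.f ≫ g.f) Dd.mon₁.tensorUnit =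
      Dd.mon₂.whiskerRight f.f Dd.mon₁.tensorUnit ≫
        Dd.mon₂.whiskerRight g.f Dd.mon₁.tensorUnit from
      MonoidalCategory.comp_whiskerRight f.f g.f _]
    rw [← Category.assoc, f.hcom, Category.assoc, g.hcom, ← Category.assoc]⟩
  id_comp f := by apply IComodHom.ext; simp
  comp_id f := by apply IComodHom.ext; simp
  assoc f g h := by apply IComodHom.ext; simp

/-- A right-right `A`-Hopf module `(X, h, ϑ)` in a duoidal category: a right module over
the monoid `(A, m, e)` in `(𝒟, ∘, I)` and a right comodule over the comonoid `(A, δ, ε)`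
in `(𝒟, ∗, J)`, compatible via the entwining `λ`. -/
structure HopfMod {Dd : Duoidal D} (B : Bimonoid Dd) where
  X : D
  h : Tob B X ⟶ X
  θ : X ⟶ Gob B X
  h_unit : ηT B X ≫ h = 𝟙 X
  h_assoc : μT B X ≫ h = Tmap B h ≫ h
  θ_counit : θ ≫ εG B X = 𝟙 X
  θ_coassoc : θ ≫ δG B X = θ ≫ Gmap B θ
  compat : h ≫ θ = Tmap B θ ≫ lam B X ≫ Gmap B h

/-- Morphisms of `A`-Hopf modules. -/
@[ext]
structure HopfModHom {Dd : Duoidal D} {B : Bimonoid Dd} (M N : HopfMod B) where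
  f : M.X ⟶ N.X
  hmod : Tmap B f ≫ N.h = M.h ≫ f
  hcom : M.θ ≫ Gmap B f = f ≫ N.θ

instance {Dd : Duoidal D} {B : Bimonoid Dd} : Category (HopfMod B) where
  Hom M N := HopfModHom M N
  id M := ⟨𝟙 M.X,
    by
      letI := Dd.mon₁
      show Dd.mon₁.whiskerRight (𝟙 M.X) B.A ≫ M.h = M.h ≫ 𝟙 M.X
      rw [MonoidalCategory.id_whiskerRight, Category.comp_id]
      exact Category.id_comp M.h,
    by
      letI := Dd.mon₂
      show M.θ ≫ Dd.mon₂.whiskerRight (𝟙 M.X) B.A = 𝟙 M.X ≫ M.θ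
      rw [MonoidalCategory.id_whiskerRight, Category.id_comp]
      exact Category.comp_id M.θ⟩
  comp {M N P} f g := ⟨f.f ≫ g.f,
    by
      letI := Dd.mon₁
      rw [show Tmap B (f.f ≫ g.f) = Tmap B f.f ≫ Tmap B g.f from
        MonoidalCategory.comp_whiskerRight f.f g.f _]
      rw [Category.assoc, g.hmod, ← Category.assoc, f.hmod, Category.assoc],
    by
      letI := Dd.mon₂
      rw [show Gmap B (f.f ≫ g.f) = Gmap B f.f ≫ Gmap B g.f from
        MonoidalCategory.comp_whiskerRight f.f g.f _]
      rw [← Category.assoc, f.hcom, Category.assoc, g.hcom, ← Category.assoc]⟩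
  id_comp f := by apply HopfModHom.ext; simp
  comp_id f := by apply HopfModHom.ext; simp
  assoc f g h := by apply HopfModHom.ext; simp

/-!
Write `κ(θ, ρ) := (θ ∘ ρ) ; ζ` (`Duoidal.tensorCoaction`) for the `∘`-product of
`∗`-coactions `θ : X → X ∗ C` and `ρ : Y → Y ∗ E`. The associativity and unit axioms of `ζ` make `κ` turn a `C`-comodule and an
`E`-comodule into a `C ∘ E`-comodule, make `κ` associative up to `α`, and make
`λ : I ∘ A → A` a comonoid morphism. The coaction on `X ∘ A` is `κ(θ, δ)` corestricted along
`λ`, so its coassociativity and counitality come from those of `θ` and `δ`, while its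
compatibility with the free action `X ∘ m` is the associativity of `κ` combined with
`m ; δ = κ(δ, δ) ; (m ∗ m)`.
-/

open MonoidalCategory

/- `⊗₁, ◁₁, ▷₁` stand for the paper's `∘` and `⊗₂, ◁₂, ▷₂` for its `∗`. Mathlib's monoidal
lemmas are stated for an instance, while `Dd` carries both structures as data, so they are
applied in the form `@lemma _ _ Dd.mon₁`. -/
local infixr:70 " ⊗₁ " => Dd.mon₁.tensorObj
local infixr:70 " ⊗₂ " => Dd.mon₂.tensorObj
local infixr:70 " ⊗₁ₘ " => Dd.mon₁.tensorHom
local infixr:70 " ⊗₂ₘ " => Dd.mon₂.tensorHom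
local infixr:81 " ◁₁ " => Dd.mon₁.whiskerLeft
local infixr:81 " ◁₂ " => Dd.mon₂.whiskerLeft
local infixl:81 " ▷₁ " => Dd.mon₁.whiskerRight
local infixl:81 " ▷₂ " => Dd.mon₂.whiskerRight
local notation "𝕀" => Dd.mon₁.tensorUnit
local notation "𝕁" => Dd.mon₂.tensorUnit
local notation "α₁" => Dd.mon₁.associator
local notation "α₂" => Dd.mon₂.associator
local notation "λ₁" => Dd.mon₁.leftUnitor
local notation "ρ₂" => Dd.mon₂.rightUnitor

namespace Duoidal

variable (Dd)

theorem ζ_assoc₂_inv (W X U Y Z V : D) :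
    ((α₂ W X U).inv ⊗₁ₘ (α₂ Y Z V).inv) ≫ Dd.ζ (W ⊗₂ X) U (Y ⊗₂ Z) V ≫
        Dd.ζ W X Y Z ▷₂ (U ⊗₁ V) =
      Dd.ζ W (X ⊗₂ U) Y (Z ⊗₂ V) ≫ (W ⊗₁ Y) ◁₂ Dd.ζ X U Z V ≫
        (α₂ (W ⊗₁ Y) (X ⊗₁ Z) (U ⊗₁ V)).inv := by
  simp only [← Category.assoc]
  rw [Iso.eq_comp_inv]
  simp only [Category.assoc]
  rw [← @tensorHom_id _ _ Dd.mon₂, Dd.ζ_assoc₂, @tensorHom_comp_tensorHom_assoc _ _ Dd.mon₁,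
    Iso.inv_hom_id, Iso.inv_hom_id, @id_tensorHom_id _ _ Dd.mon₁, Category.id_comp]

section TensorCoaction

variable {X X' X'' Y Y' Y'' Z Z' C C' E E' F : D}

def tensorCoaction (θ : X ⟶ X' ⊗₂ C) (ρ : Y ⟶ Y' ⊗₂ E) :
    X ⊗₁ Y ⟶ (X' ⊗₁ Y') ⊗₂ (C ⊗₁ E) :=
  (θ ⊗₁ₘ ρ) ≫ Dd.ζ X' C Y' E

theorem tensorCoaction_def (θ : X ⟶ X' ⊗₂ C) (ρ : Y ⟶ Y' ⊗₂ E) :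
    Dd.tensorCoaction θ ρ = θ ▷₁ Y ≫ (X' ⊗₂ C) ◁₁ ρ ≫ Dd.ζ X' C Y' E := by
  rw [tensorCoaction, @tensorHom_def_assoc _ _ Dd.mon₁]

theorem tensorHom_comp_tensorCoaction {X₀ Y₀ : D} (f : X₀ ⟶ X) (g : Y₀ ⟶ Y) (θ : X ⟶ X' ⊗₂ C)
    (ρ : Y ⟶ Y' ⊗₂ E) :
    (f ⊗₁ₘ g) ≫ Dd.tensorCoaction θ ρ = Dd.tensorCoaction (f ≫ θ) (g ≫ ρ) := by
  rw [tensorCoaction, tensorCoaction, @tensorHom_comp_tensorHom_assoc _ _ Dd.mon₁]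

theorem tensorCoaction_comp_whiskerRight (θ : X ⟶ X' ⊗₂ C) (ρ : Y ⟶ Y' ⊗₂ E)
    (f : X' ⟶ X'') (g : Y' ⟶ Y'') :
    Dd.tensorCoaction θ ρ ≫ (f ⊗₁ₘ g) ▷₂ (C ⊗₁ E) =
      Dd.tensorCoaction (θ ≫ f ▷₂ C) (ρ ≫ g ▷₂ E) := by
  have h := Dd.ζ_natural f (𝟙 C) g (𝟙 E)
  rw [@tensorHom_id _ _ Dd.mon₂, @tensorHom_id _ _ Dd.mon₂, @id_tensorHom_id _ _ Dd.mon₁,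
    @tensorHom_id _ _ Dd.mon₂] at h
  rw [tensorCoaction, tensorCoaction, Category.assoc, ← h,
    @tensorHom_comp_tensorHom_assoc _ _ Dd.mon₁]

theorem tensorCoaction_comp_whiskerLeft (θ : X ⟶ X' ⊗₂ C) (ρ : Y ⟶ Y' ⊗₂ E)
    (f : C ⟶ C') (g : E ⟶ E') :
    Dd.tensorCoaction θ ρ ≫ (X' ⊗₁ Y') ◁₂ (f ⊗₁ₘ g) =
      Dd.tensorCoaction (θ ≫ X' ◁₂ f) (ρ ≫ Y' ◁₂ g) := by
  have h := Dd.ζ_natural (𝟙 X') f (𝟙 Y') g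
  rw [@id_tensorHom _ _ Dd.mon₂, @id_tensorHom _ _ Dd.mon₂, @id_tensorHom_id _ _ Dd.mon₁,
    @id_tensorHom _ _ Dd.mon₂] at h
  rw [tensorCoaction, tensorCoaction, Category.assoc, ← h,
    @tensorHom_comp_tensorHom_assoc _ _ Dd.mon₁]

theorem tensorCoaction_comp_tensorHom_whiskerLeft (θ : X ⟶ X' ⊗₂ C) (ρ : Y ⟶ Y' ⊗₂ E)
    (f : Y' ⟶ Y'') (g : E ⟶ E') :
    Dd.tensorCoaction θ ρ ≫ ((X' ◁₁ f) ⊗₂ₘ (C ◁₁ g)) = Dd.tensorCoaction θ (ρ ≫ (f ⊗₂ₘ g)) := by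
  have h := Dd.ζ_natural (𝟙 X') (𝟙 C) f g
  rw [@id_tensorHom_id _ _ Dd.mon₂, @id_tensorHom _ _ Dd.mon₁, @id_tensorHom _ _ Dd.mon₁,
    @id_tensorHom _ _ Dd.mon₁] at h
  rw [tensorCoaction, tensorCoaction, Category.assoc, ← h,
    @tensorHom_comp_whiskerLeft_assoc _ _ Dd.mon₁]

theorem tensorCoaction_assoc (θ : X ⟶ X' ⊗₂ C) (ρ : Y ⟶ Y' ⊗₂ E) (σ : Z ⟶ Z' ⊗₂ F) :
    Dd.tensorCoaction (Dd.tensorCoaction θ ρ) σ ≫ ((α₁ X' Y' Z').hom ⊗₂ₘ (α₁ C E F).hom) =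
      (α₁ X Y Z).hom ≫ Dd.tensorCoaction θ (Dd.tensorCoaction ρ σ) := by
  rw [tensorCoaction, tensorCoaction, tensorCoaction, tensorCoaction,
    ← @tensorHom_comp_whiskerRight _ _ Dd.mon₁, Category.assoc, Category.assoc, Dd.ζ_assoc₁,
    @associator_naturality_assoc _ _ Dd.mon₁, @tensorHom_comp_whiskerLeft_assoc _ _ Dd.mon₁]

/- For `g = δ` this says that `λ : I ∘ A → A` is a comonoid morphism. -/
theorem leftUnitor_hom_comp (g : Y ⟶ Y' ⊗₂ E) :
    (λ₁ Y).hom ≫ g = Dd.tensorCoaction Dd.ΔI g ≫ ((λ₁ Y').hom ⊗₂ₘ (λ₁ E).hom) := by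
  rw [tensorCoaction, @tensorHom_def' _ _ Dd.mon₁, Category.assoc, Category.assoc,
    reassoc_of% Dd.ζ_unit₁ Y' E, @tensorHom_comp_tensorHom _ _ Dd.mon₂, Iso.inv_hom_id,
    Iso.inv_hom_id, @id_tensorHom_id _ _ Dd.mon₂, Category.comp_id,
    @leftUnitor_naturality _ _ Dd.mon₁]

theorem tensorCoaction_counit (θ : X ⟶ X' ⊗₂ C) (ρ : Y ⟶ Y' ⊗₂ E) (f : C ⟶ 𝕁) (g : E ⟶ 𝕁) :
    Dd.tensorCoaction θ ρ ≫ (X' ⊗₁ Y') ◁₂ ((f ⊗₁ₘ g) ≫ Dd.μJ) ≫ (ρ₂ (X' ⊗₁ Y')).hom =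
      (θ ≫ X' ◁₂ f ≫ (ρ₂ X').hom) ⊗₁ₘ (ρ ≫ Y' ◁₂ g ≫ (ρ₂ Y').hom) := by
  have hunit : Dd.ζ X' 𝕁 Y' 𝕁 ≫ (X' ⊗₁ Y') ◁₂ Dd.μJ ≫ (ρ₂ (X' ⊗₁ Y')).hom =
      (ρ₂ X').hom ⊗₁ₘ (ρ₂ Y').hom := by
    rw [← Category.id_comp (Dd.ζ X' 𝕁 Y' 𝕁), ← @id_tensorHom_id _ _ Dd.mon₁,
      ← Iso.hom_inv_id (ρ₂ X'), ← Iso.hom_inv_id (ρ₂ Y'), ← @tensorHom_comp_tensorHom _ _ Dd.mon₁]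
    simp only [Category.assoc]
    rw [reassoc_of% Dd.ζ_unit₃ X' Y', Iso.inv_hom_id, Category.comp_id]
  simp only [@whiskerLeft_comp _ _ Dd.mon₂, Category.assoc]
  rw [reassoc_of% Dd.tensorCoaction_comp_whiskerLeft, tensorCoaction, Category.assoc, hunit,
    @tensorHom_comp_tensorHom _ _ Dd.mon₁]
  simp only [Category.assoc]

theorem tensorCoaction_coassoc (θ : X ⟶ X ⊗₂ C) (ρ : Y ⟶ Y ⊗₂ E) (ΔC : C ⟶ C ⊗₂ C)
    (ΔE : E ⟶ E ⊗₂ E) (hθ : θ ≫ X ◁₂ ΔC ≫ (α₂ X C C).inv = θ ≫ θ ▷₂ C)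
    (hρ : ρ ≫ Y ◁₂ ΔE ≫ (α₂ Y E E).inv = ρ ≫ ρ ▷₂ E) :
    Dd.tensorCoaction θ ρ ≫ (X ⊗₁ Y) ◁₂ Dd.tensorCoaction ΔC ΔE ≫
        (α₂ (X ⊗₁ Y) (C ⊗₁ E) (C ⊗₁ E)).inv =
      Dd.tensorCoaction θ ρ ≫ Dd.tensorCoaction θ ρ ▷₂ (C ⊗₁ E) := by
  rw [tensorCoaction.eq_1 Dd ΔC ΔE, @whiskerLeft_comp _ _ Dd.mon₂, Category.assoc,
    reassoc_of% Dd.tensorCoaction_comp_whiskerLeft, tensorCoaction.eq_1 Dd (θ ≫ _),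
    Category.assoc, ← Dd.ζ_assoc₂_inv, @tensorHom_comp_tensorHom_assoc _ _ Dd.mon₁]
  simp only [Category.assoc, hθ, hρ]
  nth_rw 2 [tensorCoaction.eq_1 Dd θ ρ]
  rw [@comp_whiskerRight _ _ Dd.mon₂, reassoc_of% Dd.tensorCoaction_comp_whiskerRight,
    tensorCoaction.eq_1 Dd (θ ≫ _), Category.assoc]

end TensorCoaction

end Duoidal

theorem ηT_comp_μT (X : D) : ηT B (Tob B X) ≫ μT B X = 𝟙 (Tob B X) := by
  dsimp only [ηT, μT, Tob]
  rw [Category.assoc, @associator_naturality_right_assoc _ _ Dd.mon₁,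
    ← @whiskerLeft_comp _ _ Dd.mon₁, B.m_unit_right, ← @rightUnitor_tensor_hom _ _ Dd.mon₁,
    Iso.inv_hom_id]

theorem μT_assoc (X : D) : μT B (Tob B X) ≫ μT B X = Tmap B (μT B X) ≫ μT B X := by
  dsimp only [μT, Tmap, Tob]
  rw [Category.assoc, @associator_naturality_right_assoc _ _ Dd.mon₁,
    ← @pentagon_assoc _ _ Dd.mon₁, ← @whiskerLeft_comp _ _ Dd.mon₁,
    ← @whiskerLeft_comp _ _ Dd.mon₁, B.m_assoc, @whiskerLeft_comp _ _ Dd.mon₁,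
    ← @associator_naturality_middle_assoc _ _ Dd.mon₁, @comp_whiskerRight_assoc _ _ Dd.mon₁]

theorem μT_naturality {X Y : D} (f : X ⟶ Y) :
    Tmap B (Tmap B f) ≫ μT B Y = μT B X ≫ Tmap B f := by
  dsimp only [Tmap, μT, Tob]
  rw [@associator_naturality_left_assoc _ _ Dd.mon₁, Category.assoc,
    @whisker_exchange _ _ Dd.mon₁]

namespace IComod

def freeCoaction (M : IComod Dd) : Tob B M.X ⟶ Gob B (Tob B M.X) :=
  Dd.tensorCoaction M.θ B.δ ≫ (M.X ⊗₁ B.A) ◁₂ (λ₁ B.A).hom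

theorem freeCoaction_counit (M : IComod Dd) :
    M.freeCoaction B ≫ εG B (Tob B M.X) = 𝟙 (Tob B M.X) := by
  have hε : (λ₁ B.A).hom ≫ B.ε = (Dd.τ ⊗₁ₘ B.ε) ≫ Dd.μJ := by
    rw [@tensorHom_def' _ _ Dd.mon₁, Category.assoc, Dd.μJ_unit_left,
      @leftUnitor_naturality _ _ Dd.mon₁]
  dsimp only [freeCoaction, εG, Tob, Gob]
  rw [Category.assoc, ← @whiskerLeft_comp_assoc _ _ Dd.mon₂, hε, Dd.tensorCoaction_counit,
    M.counit, B.δ_counit_right, @id_tensorHom_id _ _ Dd.mon₁]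

theorem freeCoaction_coassoc (M : IComod Dd) :
    M.freeCoaction B ≫ δG B (Tob B M.X) = M.freeCoaction B ≫ Gmap B (M.freeCoaction B) := by
  have hδ : B.δ ≫ B.A ◁₂ B.δ ≫ (α₂ B.A B.A B.A).inv = B.δ ≫ B.δ ▷₂ B.A := by
    rw [← reassoc_of% B.δ_coassoc, Iso.hom_inv_id, Category.comp_id]
  dsimp only [freeCoaction, δG, Gmap, Tob, Gob]
  rw [Category.assoc, ← @whiskerLeft_comp_assoc _ _ Dd.mon₂, Dd.leftUnitor_hom_comp,
    @whiskerLeft_comp_assoc _ _ Dd.mon₂,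
    ← @id_tensorHom _ _ Dd.mon₂ _ _ _ ((λ₁ B.A).hom ⊗₂ₘ (λ₁ B.A).hom),
    @associator_inv_naturality _ _ Dd.mon₂, @id_tensorHom _ _ Dd.mon₂,
    reassoc_of% Dd.tensorCoaction_coassoc M.θ B.δ Dd.ΔI B.δ M.coassoc hδ,
    @comp_whiskerRight _ _ Dd.mon₂, Category.assoc, reassoc_of% @whisker_exchange _ _ Dd.mon₂,
    ← @tensorHom_def' _ _ Dd.mon₂]

theorem freeCoaction_naturality {M N : IComod Dd} (f : M ⟶ N) :
    M.freeCoaction B ≫ Gmap B (Tmap B f.f) = Tmap B f.f ≫ N.freeCoaction B := by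
  dsimp only [freeCoaction, Gmap, Tmap, Tob, Gob]
  rw [Category.assoc, @whisker_exchange _ _ Dd.mon₂, ← @tensorHom_id _ _ Dd.mon₁ _ _ f.f B.A,
    reassoc_of% Dd.tensorCoaction_comp_whiskerRight, f.hcom, @id_whiskerRight _ _ Dd.mon₂,
    Category.comp_id, reassoc_of% Dd.tensorHom_comp_tensorCoaction, Category.id_comp]

theorem μT_comp_freeCoaction (M : IComod Dd) :
    μT B M.X ≫ M.freeCoaction B =
      Tmap B (M.freeCoaction B) ≫ lam B (Tob B M.X) ≫ Gmap B (μT B M.X) := by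
  have hcomul : Dd.tensorCoaction B.δ B.δ ≫ (B.m ⊗₂ₘ B.m) = B.m ≫ B.δ := by
    rw [B.compat₁, Duoidal.tensorCoaction, Category.assoc]
  have hmul : ((M.X ⊗₁ B.A) ⊗₁ B.A) ◁₂ ((λ₁ B.A).hom ▷₁ B.A) ≫
        ((M.X ⊗₁ B.A) ⊗₁ B.A) ◁₂ B.m ≫ ((α₁ M.X B.A B.A).hom ≫ M.X ◁₁ B.m) ▷₂ B.A =
      ((α₁ M.X B.A B.A).hom ⊗₂ₘ (α₁ 𝕀 B.A B.A).hom) ≫ ((M.X ◁₁ B.m) ⊗₂ₘ (𝕀 ◁₁ B.m)) ≫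
        (M.X ⊗₁ B.A) ◁₂ (λ₁ B.A).hom := by
    rw [← @whiskerLeft_comp_assoc _ _ Dd.mon₂, ← @tensorHom_def' _ _ Dd.mon₂,
      @leftUnitor_whiskerRight _ _ Dd.mon₁, Category.assoc, ← @leftUnitor_naturality _ _ Dd.mon₁,
      ← @id_tensorHom _ _ Dd.mon₂, @tensorHom_comp_tensorHom _ _ Dd.mon₂,
      @tensorHom_comp_tensorHom _ _ Dd.mon₂, Category.comp_id]
  have hκ : Dd.tensorCoaction (Dd.tensorCoaction M.θ B.δ ≫ (M.X ⊗₁ B.A) ◁₂ (λ₁ B.A).hom) B.δ =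
      Dd.tensorCoaction (Dd.tensorCoaction M.θ B.δ) B.δ ≫
        ((M.X ⊗₁ B.A) ⊗₁ B.A) ◁₂ ((λ₁ B.A).hom ▷₁ B.A) := by
    rw [← @tensorHom_id _ _ Dd.mon₁, Dd.tensorCoaction_comp_whiskerLeft,
      @whiskerLeft_id _ _ Dd.mon₂, Category.comp_id]
  dsimp only [freeCoaction, Tmap, lam, Gmap, μT, Tob, Gob]
  simp only [Category.assoc]
  rw [← reassoc_of% Dd.tensorCoaction_def, hκ, Category.assoc, hmul,
    reassoc_of% Dd.tensorCoaction_assoc, reassoc_of% Dd.tensorCoaction_comp_tensorHom_whiskerLeft,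
    hcomul, ← @id_tensorHom _ _ Dd.mon₁ M.X _ _ B.m, reassoc_of% Dd.tensorHom_comp_tensorCoaction,
    Category.id_comp]


def toHopfMod (M : IComod Dd) : HopfMod B where
  X := M.X ⊗₁ B.A
  h := μT B M.X
  θ := M.freeCoaction B
  h_unit := ηT_comp_μT B M.X
  h_assoc := μT_assoc B M.X
  θ_counit := M.freeCoaction_counit B
  θ_coassoc := M.freeCoaction_coassoc B
  compat := M.μT_comp_freeCoaction B

def toHopfModFunctor : IComod Dd ⥤ HopfMod B where
  obj M := M.toHopfMod B
  map f := ⟨Tmap B f.f, μT_naturality B f.f, freeCoaction_naturality B f⟩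
  map_id M := HopfModHom.ext (@id_whiskerRight _ _ Dd.mon₁ M.X B.A)
  map_comp f g := HopfModHom.ext (@comp_whiskerRight _ _ Dd.mon₁ _ _ _ f.f g.f B.A)

end IComod

/-- Let `(𝒟, ∘, I, ∗, J)` be a duoidal category and `A` a bimonoid in `𝒟`.
The assignment sending a right `I`-comodule `(X, θ)` to the triple
`(X ∘ A, (X ∘ m) ∘ a, ϑ)`, with
`ϑ = ((X ∘ A) ∗ (λ₁)) ∘ ζ ∘ ((X ∗ I) ∘ δ) ∘ (θ ∘ A) : X ∘ A ⟶ (X ∘ A) ∗ A`,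
defines a functor `K : 𝒟^I ⥤ 𝒟^A_A` into the category of right-right `A`-Hopf modules,
whose underlying right `A`-module is the free module `φ_A(X)` (this is the commutativity
`U^{Ĝ} ∘ K = φ_A ∘ U^I`). -/
theorem statement16 (B : Bimonoid Dd) :
    ∃ K : IComod Dd ⥤ HopfMod B,
      (∀ M : IComod Dd,
        (K.obj M).X = Dd.mon₁.tensorObj M.X B.A ∧
        HEq (K.obj M).h
          ((Dd.mon₁.associator M.X B.A B.A).hom ≫ Dd.mon₁.whiskerLeft M.X B.m) ∧
        HEq (K.obj M).θ
          (Tmap B M.θ ≫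
            Dd.mon₁.whiskerLeft (Dd.mon₂.tensorObj M.X Dd.mon₁.tensorUnit) B.δ ≫
            Dd.ζ M.X Dd.mon₁.tensorUnit B.A B.A ≫
            Dd.mon₂.whiskerLeft (Dd.mon₁.tensorObj M.X B.A)
              (Dd.mon₁.leftUnitor B.A).hom)) ∧
      (∀ (M N : IComod Dd) (f : M ⟶ N), HEq (K.map f).f (Tmap B f.f)) := by
  refine ⟨IComod.toHopfModFunctor B, fun M => ⟨rfl, HEq.rfl, heq_of_eq ?_⟩, fun _ _ _ => HEq.rfl⟩
  dsimp only [IComod.toHopfModFunctor, IComod.toHopfMod, IComod.freeCoaction, Tmap, Tob, Gob]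
  rw [Duoidal.tensorCoaction_def]
  simp only [Category.assoc]
end

section
/- Let F ⊣ R : 𝒜 → ℬ be an adjunction, G a comonad on 𝒜, and K : ℬ → 𝒜^G a functor with U^G ∘ K = F. Then K is an equivalence of categories if and only if F is comonadic and the canonical comonad morphism t_K : FR ⟶ G is an isomorphism (i.e. F is a G-Galois functor). -/
/-!
The hypotheses pin `K` down: it is the comparison functor `ℬ ⥤ 𝒜^{FR}` followed by the change of
comonad `𝒜^{FR} ⥤ 𝒜^G` along `t_K`, because `κ_X = F η_X ≫ (t_K)_{F X}` by a triangle identity.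
When `t_K` is invertible the change of comonad is an equivalence, so `K` is one exactly when the
comparison functor is. Conversely, if `K` is an equivalence then `R` and `cofree ⋙ K⁻¹` are both
right adjoint to `F = K ⋙ forget`; uniqueness of adjoints makes the transpose `K (R Y) ⟶ cofree Y`
of the counit `ε_Y` an isomorphism, and its underlying map is `(t_K)_Y`.
-/

open CategoryTheory

universe v₁ v₂ u₁ u₂

namespace CategoryTheory.Comonad

variable {A : Type u₁} [Category.{v₁} A]

def coalgebraFunctorOfComonadHom {G₁ G₂ : Comonad A} (τ : G₁ ⟶ G₂) :
    G₁.Coalgebra ⥤ G₂.Coalgebra where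
  obj C :=
    { A := C.A
      a := C.a ≫ τ.app C.A
      counit := by simp [C.counit]
      coassoc := by
        rw [Category.assoc, τ.app_δ, C.coassoc_assoc]
        simp [τ.naturality_assoc] }
  map f :=
    { f := f.f
      h := by
        dsimp only
        rw [Category.assoc, ← τ.naturality, f.h_assoc] }

def coalgebraEquivOfIsoComonads {G₁ G₂ : Comonad A} (e : G₁ ≅ G₂) :
    G₁.Coalgebra ≌ G₂.Coalgebra :=
  .mk (coalgebraFunctorOfComonadHom e.hom) (coalgebraFunctorOfComonadHom e.inv)
    (NatIso.ofComponents
      (fun C => Coalgebra.isoMk (Iso.refl C.A) (by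
        change C.a ≫ G₁.map (𝟙 C.A) = 𝟙 C.A ≫ (C.a ≫ e.hom.app C.A) ≫ e.inv.app C.A
        simp [← NatTrans.comp_app, ← comp_toNatTrans]))
      (fun f => by ext; exact (Category.comp_id f.f).trans (Category.id_comp f.f).symm))
    (NatIso.ofComponents
      (fun C => Coalgebra.isoMk (Iso.refl C.A) (by
        change ((C.a ≫ e.inv.app C.A) ≫ e.hom.app C.A) ≫ G₂.map (𝟙 C.A) = 𝟙 C.A ≫ C.a
        simp [← NatTrans.comp_app, ← comp_toNatTrans]))
      (fun f => by ext; exact (Category.comp_id f.f).trans (Category.id_comp f.f).symm))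

instance {G₁ G₂ : Comonad A} (τ : G₁ ⟶ G₂) [∀ X, IsIso (τ.app X)] :
    (coalgebraFunctorOfComonadHom τ).IsEquivalence :=
  (coalgebraEquivOfIsoComonads (ComonadIso.mk (NatIso.ofComponents (fun X => asIso (τ.app X))
    (τ.naturality ·)) τ.app_ε τ.app_δ)).isEquivalence_functor

variable {G : Comonad A}

lemma Coalgebra.ext {C D : G.Coalgebra} (hA : C.A = D.A) (ha : C.a ≍ D.a) : C = D := by
  cases C; cases D; cases hA; cases ha; rfl

lemma Coalgebra.Hom.hext {C C' D D' : G.Coalgebra} (hC : C = C') (hD : D = D')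
    {f : C ⟶ D} {g : C' ⟶ D'} (h : f.f ≍ g.f) : f ≍ g := by
  subst hC hD
  exact heq_of_eq (Coalgebra.Hom.ext (eq_of_heq h))

lemma adj_homEquiv_apply_f (C : G.Coalgebra) (Y : A) (g : G.forget.obj C ⟶ Y) :
    (G.adj.homEquiv C Y g).f = C.a ≫ G.map g := by
  rw [Adjunction.homEquiv_unit, Coalgebra.comp_f]
  simp only [Functor.comp_obj, adj_unit, cofree_map_f]
  rfl

end CategoryTheory.Comonad

namespace CategoryTheory.Adjunction

lemma isIso_homEquiv_counit_of_equivalence {A B C : Type*} [Category A] [Category B]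
    [Category C] (E : B ≌ C) {U : C ⥤ A} {V : A ⥤ C} (adjUV : U ⊣ V)
    {R : A ⥤ B} (adj : E.functor ⋙ U ⊣ R) (Y : A) :
    IsIso (adjUV.homEquiv _ _ (adj.counit.app Y)) := by
  let adj' := E.toAdjunction.comp adjUV
  let θ := (adj.rightAdjointUniq adj').hom.app Y
  suffices adjUV.homEquiv _ _ (adj.counit.app Y) = E.functor.map θ ≫ E.counit.app (V.obj Y) by
    rw [this]; infer_instance
  rw [← Equiv.eq_symm_apply, homEquiv_counit, ← adj.rightAdjointUniq_hom_app_counit adj' Y,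
    comp_counit_app]
  simp [θ]

variable {A : Type u₁} {B : Type u₂} [Category.{v₁} A] [Category.{v₂} B]
  {F : B ⥤ A} {R : A ⥤ B} (adj : F ⊣ R) {G : Comonad A} (κ : F ⟶ F ⋙ (G : A ⥤ A))

lemma map_unit_comp_coaction_comp_map_counit (X : B) :
    F.map (adj.unit.app X) ≫ κ.app (R.obj (F.obj X)) ≫ G.map (adj.counit.app (F.obj X)) =
      κ.app X := by
  have := κ.naturality (adj.unit.app X)
  dsimp only [Functor.comp_obj, Functor.comp_map] at this
  rw [reassoc_of% this, ← G.map_comp, left_triangle_components, G.map_id, Category.comp_id]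

variable (hcounit : ∀ X : B, κ.app X ≫ G.ε.app (F.obj X) = 𝟙 (F.obj X))
  (hcoassoc : ∀ X : B, κ.app X ≫ G.δ.app (F.obj X) = κ.app X ≫ G.map (κ.app X))

def comonadHomOfCoaction : adj.toComonad ⟶ G where
  app Y := κ.app (R.obj Y) ≫ G.map (adj.counit.app Y)
  naturality Y Y' g := by
    have hκ := κ.naturality (R.map g)
    dsimp only [Functor.comp_obj, Functor.comp_map] at hκ
    change F.map (R.map g) ≫ κ.app (R.obj Y') ≫ G.map (adj.counit.app Y') =
      (κ.app (R.obj Y) ≫ G.map (adj.counit.app Y)) ≫ G.map g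
    have hε : F.map (R.map g) ≫ adj.counit.app Y' = adj.counit.app Y ≫ g :=
      adj.counit.naturality g
    simp only [reassoc_of% hκ, Category.assoc, ← Functor.map_comp, hε]
  app_ε Y := by
    change (κ.app (R.obj Y) ≫ G.map (adj.counit.app Y)) ≫ G.ε.app Y = adj.counit.app Y
    simp [G.counit_naturality, reassoc_of% hcounit]
  app_δ Y := by
    change (κ.app (R.obj Y) ≫ G.map (adj.counit.app Y)) ≫ G.δ.app Y =
      F.map (adj.unit.app (R.obj Y)) ≫
        (κ.app (R.obj (F.obj (R.obj Y))) ≫ G.map (adj.counit.app (F.obj (R.obj Y)))) ≫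
          G.map (κ.app (R.obj Y) ≫ G.map (adj.counit.app Y))
    simp only [Category.assoc, reassoc_of% map_unit_comp_coaction_comp_map_counit adj κ (R.obj Y)]
    dsimp only [Functor.id_obj, Functor.comp_obj]
    rw [G.delta_naturality, reassoc_of% hcoassoc, G.map_comp]

abbrev coactionComparison : B ⥤ G.Coalgebra :=
  Comonad.comparison adj ⋙
    Comonad.coalgebraFunctorOfComonadHom (adj.comonadHomOfCoaction κ hcounit hcoassoc)

lemma coactionComparison_obj_a (X : B) :
    ((adj.coactionComparison κ hcounit hcoassoc).obj X).a = κ.app X :=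
  map_unit_comp_coaction_comp_map_counit adj κ X

lemma eq_coactionComparison (K : B ⥤ G.Coalgebra) (hKobjA : ∀ X : B, (K.obj X).A = F.obj X)
    (hKobja : ∀ X : B, (K.obj X).a ≍ κ.app X)
    (hKmap : ∀ {X Y : B} (f : X ⟶ Y), (K.map f).f ≍ F.map f) :
    K = adj.coactionComparison κ hcounit hcoassoc := by
  have hobj (X : B) : K.obj X = (adj.coactionComparison κ hcounit hcoassoc).obj X :=
    Comonad.Coalgebra.ext (hKobjA X)
      ((hKobja X).trans (heq_of_eq (coactionComparison_obj_a adj κ hcounit hcoassoc X).symm))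
  exact Functor.hext hobj fun X Y f => Comonad.Coalgebra.Hom.hext (hobj X) (hobj Y) (hKmap f)

lemma isIso_comonadHomOfCoaction_app [(adj.coactionComparison κ hcounit hcoassoc).IsEquivalence]
    (Y : A) : IsIso ((adj.comonadHomOfCoaction κ hcounit hcoassoc).app Y) := by
  have hφ : (G.adj.homEquiv ((adj.coactionComparison κ hcounit hcoassoc).obj (R.obj Y)) Y
      (adj.counit.app Y)).f = (adj.comonadHomOfCoaction κ hcounit hcoassoc).app Y :=
    (Comonad.adj_homEquiv_apply_f _ Y _).trans
      (eq_whisker (coactionComparison_obj_a adj κ hcounit hcoassoc (R.obj Y)) _)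
  rw [← hφ]
  -- the instance is stated for `asEquivalence.functor`, so instance search would not find it
  exact @Functor.map_isIso _ _ _ _ _ _ G.forget _ (isIso_homEquiv_counit_of_equivalence
    (adj.coactionComparison κ hcounit hcoassoc).asEquivalence G.adj adj Y)

theorem isEquivalence_coactionComparison_iff :
    (adj.coactionComparison κ hcounit hcoassoc).IsEquivalence ↔
      (Comonad.comparison adj).IsEquivalence ∧
        ∀ Y, IsIso ((adj.comonadHomOfCoaction κ hcounit hcoassoc).app Y) := by
  refine ⟨fun _ => ?_, fun ⟨_, _⟩ => inferInstance⟩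
  have := isIso_comonadHomOfCoaction_app adj κ hcounit hcoassoc
  exact ⟨Functor.isEquivalence_of_comp_right _
    (Comonad.coalgebraFunctorOfComonadHom (adj.comonadHomOfCoaction κ hcounit hcoassoc)), this⟩

end CategoryTheory.Adjunction

/-- Let `F ⊣ R : 𝒜 → ℬ` be an adjunction (with `F : ℬ ⥤ 𝒜` the left
adjoint), `G` a comonad on `𝒜`, and `K : ℬ ⥤ 𝒜^G` a functor with `U^G ∘ K = F` (so `F`
carries the left `G`-comodule structure `κ` given by the coactions of the coalgebras
`K(X)`).  Then `K` is an equivalence of categories if and only if `F` is comonadic and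
the canonical comonad morphism `t_K = (Gσ) ∘ (κR) : FR ⟶ G` is an isomorphism (i.e. `F`
is a `G`-Galois functor). -/
theorem statement18 {A : Type*} {B : Type*} [Category A] [Category B]
    (F : B ⥤ A) (R : A ⥤ B) (adj : F ⊣ R) (G : Comonad A)
    (κ : F ⟶ F ⋙ (G : A ⥤ A))
    (hcounit : ∀ X : B, κ.app X ≫ G.ε.app (F.obj X) = 𝟙 (F.obj X))
    (hcoassoc : ∀ X : B,
      κ.app X ≫ G.δ.app (F.obj X) = κ.app X ≫ (G : A ⥤ A).map (κ.app X))
    (K : B ⥤ G.Coalgebra)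
    (hKobjA : ∀ X : B, (K.obj X).A = F.obj X)
    (hKobja : ∀ X : B, HEq (K.obj X).a (κ.app X))
    (hKmap : ∀ {X Y : B} (f : X ⟶ Y), HEq (K.map f).f (F.map f)) :
    K.IsEquivalence ↔
      ((Comonad.comparison adj).IsEquivalence ∧
        ∀ X : A, IsIso (κ.app (R.obj X) ≫ (G : A ⥤ A).map (adj.counit.app X))) := by
  obtain rfl := adj.eq_coactionComparison κ hcounit hcoassoc K hKobjA hKobja hKmap
  exact adj.isEquivalence_coactionComparison_iff κ hcounit hcoassoc
end
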